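/- Fix a real N×d matrix X, x_test ∈ ℝ^d, ε ∈ ℝ^N, and λ > 0, and let μ_max be the largest eigenvalue of XᵀX. Then the map G : ℝ^d → ℝ, G(β) = x_testᵀ(XᵀX + λI_d)⁻¹Xᵀ(Xβ + ε), is Lipschitz continuous with Lipschitz constant L = ‖x_test‖ · μ_max/(μ_max + λ) with respect to the Euclidean norm on ℝ^d. -/

import Mathlib

/-!
In an orthonormal eigenbasis of `A = XᵀX` the map `v ↦ (A + λI)⁻¹ A v` scales the `i`-th
coordinate by `μᵢ / (μᵢ + λ)`, which is at most `μ_max / (μ_max + λ)` since `t ↦ t / (t + λ)`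
is increasing on `t ≥ 0`; so this map contracts Euclidean norms by that factor. The noise `ε`
cancels in `G β - G β'`, and Cauchy–Schwarz against `x_test` finishes.
-/

open Matrix
open scoped Classical

/-- Largest eigenvalue of a (Hermitian) real square matrix; junk value `0` if the
matrix is not Hermitian or the dimension is zero. -/
noncomputable def maxEig {d : ℕ} (A : Matrix (Fin d) (Fin d) ℝ) : ℝ :=
  if h : A.IsHermitian ∧ 0 < d then
    Finset.univ.sup' ⟨⟨0, h.2⟩, Finset.mem_univ _⟩ h.1.eigenvalues
  else 0

/-- The ridge-regression prediction at `x_test`, as a function of the true task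
parameter `β` generating the labels `y = Xβ + ε`. -/
noncomputable def ridgePrediction {N d : ℕ} (X : Matrix (Fin N) (Fin d) ℝ)
    (xtest : Fin d → ℝ) (ε : Fin N → ℝ) (lam : ℝ) (β : Fin d → ℝ) : ℝ :=
  xtest ⬝ᵥ ((Xᵀ * X + lam • (1 : Matrix (Fin d) (Fin d) ℝ))⁻¹ *ᵥ (Xᵀ *ᵥ (X *ᵥ β + ε)))

theorem OrthonormalBasis.norm_apply_le_of_apply_eq_smul {ι 𝕜 E : Type*} [Fintype ι] [RCLike 𝕜]
    [NormedAddCommGroup E] [InnerProductSpace 𝕜 E] (b : OrthonormalBasis ι 𝕜 E)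
    {T : E →ₗ[𝕜] E} {c : ι → 𝕜} (hT : ∀ i, T (b i) = c i • b i) {R : ℝ} (hR : 0 ≤ R)
    (hc : ∀ i, ‖c i‖ ≤ R) (x : E) : ‖T x‖ ≤ R * ‖x‖ := by
  have hTx : T x = b.repr.symm (WithLp.toLp 2 fun i => c i * b.repr x i) := by
    rw [← b.sum_repr_symm]
    conv_lhs => rw [← b.sum_repr x]
    simp only [map_sum, map_smul, hT, smul_smul, mul_comm]
  have hsq : ‖T x‖ ^ 2 ≤ (R * ‖x‖) ^ 2 := by
    rw [hTx, LinearIsometryEquiv.norm_map, ← b.repr.norm_map x, mul_pow,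
      EuclideanSpace.norm_sq_eq, EuclideanSpace.norm_sq_eq, Finset.mul_sum]
    gcongr with i
    rw [norm_mul, mul_pow]
    gcongr
    exact hc i
  exact le_of_pow_le_pow_left₀ two_ne_zero (by positivity) hsq

theorem Matrix.inv_mulVec_eq_inv_smul {n K : Type*} [Fintype n] [DecidableEq n] [Field K]
    {M : Matrix n n K} (hM : IsUnit M.det) {v : n → K} {a : K} (hv : M *ᵥ v = a • v) :
    M⁻¹ *ᵥ v = a⁻¹ • v := by
  have hv' : v = a • M⁻¹ *ᵥ v := by
    rw [← mulVec_smul, ← hv, mulVec_mulVec, nonsing_inv_mul M hM, one_mulVec]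
  rcases eq_or_ne a 0 with rfl | ha
  · rw [zero_smul] at hv'
    rw [hv', mulVec_zero, smul_zero]
  · nth_rw 2 [hv']
    rw [inv_smul_smul₀ ha]

theorem div_add_le_div_add_of_le {t m c : ℝ} (hc : 0 ≤ c) (htc : 0 < t + c) (htm : t ≤ m) :
    t / (t + c) ≤ m / (m + c) := by
  rw [div_le_div_iff₀ htc (by linarith)]
  nlinarith

theorem Matrix.IsHermitian.eigenvalues_le_maxEig {d : ℕ} {A : Matrix (Fin d) (Fin d) ℝ}
    (hA : A.IsHermitian) (i : Fin d) : hA.eigenvalues i ≤ maxEig A := by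
  rw [maxEig, dif_pos ⟨hA, i.pos⟩]
  exact Finset.le_sup' _ (Finset.mem_univ i)

theorem Matrix.PosSemidef.maxEig_nonneg {d : ℕ} {A : Matrix (Fin d) (Fin d) ℝ}
    (hA : A.PosSemidef) : 0 ≤ maxEig A := by
  rcases Nat.eq_zero_or_pos d with rfl | hd
  · simp [maxEig]
  · exact (hA.eigenvalues_nonneg ⟨0, hd⟩).trans (hA.1.eigenvalues_le_maxEig _)

theorem Matrix.IsHermitian.inv_add_smul_one_mul_mulVec_eigenvectorBasis {n : Type*} [Fintype n]
    [DecidableEq n] {A : Matrix n n ℝ} (hA : A.IsHermitian) {lam : ℝ}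
    (hM : IsUnit (A + lam • (1 : Matrix n n ℝ)).det) (i : n) :
    ((A + lam • (1 : Matrix n n ℝ))⁻¹ * A) *ᵥ ⇑(hA.eigenvectorBasis i) =
      (hA.eigenvalues i / (hA.eigenvalues i + lam)) • ⇑(hA.eigenvectorBasis i) := by
  have hMb : (A + lam • (1 : Matrix n n ℝ)) *ᵥ ⇑(hA.eigenvectorBasis i) =
      (hA.eigenvalues i + lam) • ⇑(hA.eigenvectorBasis i) := by
    rw [add_mulVec, smul_mulVec, one_mulVec, hA.mulVec_eigenvectorBasis, add_smul]
  rw [← mulVec_mulVec, hA.mulVec_eigenvectorBasis, mulVec_smul, inv_mulVec_eq_inv_smul hM hMb,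
    smul_smul, div_eq_mul_inv]

theorem Matrix.PosSemidef.norm_inv_add_smul_one_mul_mulVec_le {d : ℕ}
    {A : Matrix (Fin d) (Fin d) ℝ} (hA : A.PosSemidef) {lam : ℝ} (hlam : 0 < lam)
    (v : Fin d → ℝ) :
    ‖WithLp.toLp 2 (((A + lam • (1 : Matrix (Fin d) (Fin d) ℝ))⁻¹ * A) *ᵥ v)‖ ≤
      maxEig A / (maxEig A + lam) * ‖WithLp.toLp 2 v‖ := by
  have hM : IsUnit (A + lam • (1 : Matrix (Fin d) (Fin d) ℝ)).det :=
    (PosDef.posSemidef_add hA (PosDef.one.smul hlam)).det_pos.ne'.isUnit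
  set μ := hA.1.eigenvalues
  have hμ : ∀ i, 0 ≤ μ i := hA.eigenvalues_nonneg
  have hm : 0 ≤ maxEig A := hA.maxEig_nonneg
  refine hA.1.eigenvectorBasis.norm_apply_le_of_apply_eq_smul
    (T := toLpLin 2 2 ((A + lam • 1)⁻¹ * A)) (c := fun i => μ i / (μ i + lam)) (fun i => ?_)
    (div_nonneg hm (by linarith)) (fun i => ?_) _
  · rw [toLpLin_apply, hA.1.inv_add_smul_one_mul_mulVec_eigenvectorBasis hM, WithLp.toLp_smul,
      WithLp.toLp_ofLp]
  · rw [Real.norm_of_nonneg (div_nonneg (hμ i) (by linarith [hμ i]))]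
    exact div_add_le_div_add_of_le hlam.le (by linarith [hμ i]) (hA.1.eigenvalues_le_maxEig i)

theorem EuclideanSpace.norm_toLp_eq_sqrt {n : Type*} [Fintype n] (v : n → ℝ) :
    ‖WithLp.toLp 2 v‖ = √(∑ i, v i ^ 2) := by
  simp only [EuclideanSpace.norm_eq, Real.norm_eq_abs, sq_abs]

theorem abs_dotProduct_le_norm_toLp_mul_norm_toLp {n : Type*} [Fintype n] (x y : n → ℝ) :
    |x ⬝ᵥ y| ≤ ‖WithLp.toLp 2 x‖ * ‖WithLp.toLp 2 y‖ := by
  simpa only [EuclideanSpace.inner_toLp_toLp, star_trivial, dotProduct_comm] using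
    abs_real_inner_le_norm (WithLp.toLp 2 x) (WithLp.toLp 2 y)

theorem ridgePrediction_sub {N d : ℕ} (X : Matrix (Fin N) (Fin d) ℝ) (xtest : Fin d → ℝ)
    (ε : Fin N → ℝ) (lam : ℝ) (β β' : Fin d → ℝ) :
    ridgePrediction X xtest ε lam β - ridgePrediction X xtest ε lam β' =
      xtest ⬝ᵥ (((Xᵀ * X + lam • (1 : Matrix (Fin d) (Fin d) ℝ))⁻¹ * (Xᵀ * X)) *ᵥ (β - β')) := by
  rw [ridgePrediction, ridgePrediction, ← dotProduct_sub, ← mulVec_sub, ← mulVec_sub,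
    add_sub_add_right_eq_sub, ← mulVec_sub, mulVec_mulVec, mulVec_mulVec, Matrix.mul_assoc]

theorem ridgePrediction_lipschitz_general {N d : ℕ}
    (X : Matrix (Fin N) (Fin d) ℝ) (xtest : Fin d → ℝ) (ε : Fin N → ℝ)
    (lam : ℝ) (hlam : 0 < lam) :
    ∀ β β' : Fin d → ℝ,
      |ridgePrediction X xtest ε lam β - ridgePrediction X xtest ε lam β'| ≤
        (Real.sqrt (∑ j, (xtest j) ^ 2) * (maxEig (Xᵀ * X) / (maxEig (Xᵀ * X) + lam))) *
          Real.sqrt (∑ j, (β j - β' j) ^ 2) := by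
  intro β β'
  have hA : (Xᵀ * X).PosSemidef := by simpa using posSemidef_conjTranspose_mul_self X
  set M := Xᵀ * X + lam • (1 : Matrix (Fin d) (Fin d) ℝ)
  set R := maxEig (Xᵀ * X) / (maxEig (Xᵀ * X) + lam)
  calc |ridgePrediction X xtest ε lam β - ridgePrediction X xtest ε lam β'|
      = |xtest ⬝ᵥ ((M⁻¹ * (Xᵀ * X)) *ᵥ (β - β'))| := by rw [ridgePrediction_sub]
    _ ≤ ‖WithLp.toLp 2 xtest‖ * ‖WithLp.toLp 2 ((M⁻¹ * (Xᵀ * X)) *ᵥ (β - β'))‖ :=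
      abs_dotProduct_le_norm_toLp_mul_norm_toLp _ _
    _ ≤ ‖WithLp.toLp 2 xtest‖ * (R * ‖WithLp.toLp 2 (β - β')‖) := by
      gcongr
      exact hA.norm_inv_add_smul_one_mul_mulVec_le hlam _
    _ = _ := by simp only [EuclideanSpace.norm_toLp_eq_sqrt, Pi.sub_apply, mul_assoc]

/-- **Lipschitz continuity of the in-context ridge predictor.** The map
`G(β) = x_testᵀ (XᵀX + λI_d)⁻¹ Xᵀ (Xβ + ε)` is Lipschitz with constant
`L = ‖x_test‖ · μ_max/(μ_max + λ)` with respect to the Euclidean norm on `ℝ^d`,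
where `μ_max` is the largest eigenvalue of `XᵀX`. -/
theorem ridgePrediction_lipschitz {N d : ℕ} (hN : 0 < N) (hd : 0 < d)
    (X : Matrix (Fin N) (Fin d) ℝ) (xtest : Fin d → ℝ) (ε : Fin N → ℝ)
    (lam : ℝ) (hlam : 0 < lam) :
    ∀ β β' : Fin d → ℝ,
      |ridgePrediction X xtest ε lam β - ridgePrediction X xtest ε lam β'| ≤
        (Real.sqrt (∑ j, (xtest j) ^ 2) * (maxEig (Xᵀ * X) / (maxEig (Xᵀ * X) + lam))) *
          Real.sqrt (∑ j, (β j - β' j) ^ 2) :=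
  ridgePrediction_lipschitz_general X xtest ε lam hlam
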